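/- Strong bilinear estimate: for f₁, f₂ ∈ ℓ^2(ℤ) with s := dist(supp f₁, supp f₂) and any B > 0, one has sup_{|r| ≤ B} ‖(T_r f₁)·(T_r f₂)‖_1 ≤ min(1, 8 e^{16B} (4B)^{⌈s/2⌉} / ⌈s/2⌉!) · ‖f₁‖_2 ‖f₂‖_2, where T_r = e^{irΔ} and the product is pointwise. -/

import Mathlib

/-- The discrete Laplacian on `ℤ`. -/
noncomputable def lap (f : ℤ → ℂ) : ℤ → ℂ := fun x => f (x + 1) - 2 * f x + f (x - 1)

/-- The free discrete Schrödinger evolution `T_r = e^{irΔ}`, given by its power series. -/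
noncomputable def Tr (r : ℝ) (f : ℤ → ℂ) : ℤ → ℂ := fun x =>
  ∑' n : ℕ, ((Complex.I * (r : ℂ)) ^ n / (n.factorial : ℂ)) * (lap^[n] f x)

/-- The `ℓ²(ℤ)` norm. -/
noncomputable def l2norm (f : ℤ → ℂ) : ℝ := Real.sqrt (∑' x : ℤ, ‖f x‖ ^ 2)

open NormedSpace
open scoped ENNReal ComplexConjugate
noncomputable section

abbrev Hs := lp (fun _ : ℤ => ℂ) 2

lemma rpow_two_eq (t : ℝ) : t ^ (2 : ℝ≥0∞).toReal = t ^ 2 := by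
  rw [show (2:ℝ≥0∞).toReal = 2 by norm_num, show (2:ℝ) = ((2:ℕ):ℝ) by norm_num,
    Real.rpow_natCast]

lemma memlp_of_sq {f : ℤ → ℂ} (h : Summable fun x => ‖f x‖ ^ 2) : Memℓp f 2 :=
  memℓp_gen (by simpa only [rpow_two_eq] using h)

lemma sq_summable' {f : ℤ → ℂ} (h : Memℓp f 2) : Summable fun x => ‖f x‖ ^ 2 := by
  have := (memℓp_gen_iff (by norm_num : 0 < (2:ℝ≥0∞).toReal)).1 h
  simpa only [rpow_two_eq] using this

lemma lp_norm_sq (f : Hs) : ‖f‖ ^ 2 = ∑' x, ‖f x‖ ^ 2 := by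
  have := lp.norm_rpow_eq_tsum (by norm_num : 0 < (2:ℝ≥0∞).toReal) f
  rw [rpow_two_eq ‖f‖] at this
  rw [this]; exact tsum_congr fun x => rpow_two_eq _

lemma summable_shift (c : ℤ) (g : ℤ → ℝ) (h : Summable g) : Summable fun x => g (x + c) :=
  ((Equiv.addRight c).summable_iff (f := g)).2 h

lemma tsum_shift (c : ℤ) (g : ℤ → ℝ) : ∑' x, g (x + c) = ∑' x, g x :=
  (Equiv.addRight c).tsum_eq g

lemma tsum_shiftC (c : ℤ) (g : ℤ → ℂ) : ∑' x, g (x + c) = ∑' x, g x :=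
  (Equiv.addRight c).tsum_eq g

lemma memlp_shift (c : ℤ) {f : ℤ → ℂ} (h : Memℓp f 2) : Memℓp (fun x => f (x + c)) 2 := by
  have h1 : Summable fun x => ‖f x‖ ^ 2 := sq_summable' h
  exact memlp_of_sq (summable_shift c (fun x => ‖f x‖ ^ 2) h1)

/-- shift as continuous linear map -/
def shiftL (c : ℤ) : Hs →L[ℂ] Hs :=
  LinearMap.mkContinuous
    { toFun := fun f => ⟨fun x => f (x + c), memlp_shift c (lp.memℓp f)⟩
      map_add' := fun f g => rfl
      map_smul' := fun m f => rfl } 1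
    (by
      intro f
      rw [one_mul]
      have h2 : ‖(⟨fun x => (f : ℤ → ℂ) (x + c), memlp_shift c (lp.memℓp f)⟩ : Hs)‖ ^ 2
          = ‖f‖ ^ 2 := by
        rw [lp_norm_sq, lp_norm_sq]
        exact tsum_shift c (fun x => ‖(f : ℤ → ℂ) x‖ ^ 2)
      refine le_of_eq ?_
      calc ‖(⟨fun x => (f : ℤ → ℂ) (x + c), memlp_shift c (lp.memℓp f)⟩ : Hs)‖
          = Real.sqrt (‖(⟨fun x => (f : ℤ → ℂ) (x + c), _⟩ : Hs)‖ ^ 2) :=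
            (Real.sqrt_sq (norm_nonneg _)).symm
        _ = Real.sqrt (‖f‖ ^ 2) := by rw [h2]
        _ = ‖f‖ := Real.sqrt_sq (norm_nonneg _))

@[simp] lemma shiftL_apply (c : ℤ) (f : Hs) (x : ℤ) : (shiftL c f : ℤ → ℂ) x = f (x + c) := rfl

lemma shiftL_norm_le (c : ℤ) : ‖shiftL c‖ ≤ 1 :=
  LinearMap.mkContinuous_norm_le _ zero_le_one _

/-- the discrete Laplacian as a continuous linear map on ℓ². -/
def lapCLM : Hs →L[ℂ] Hs := shiftL 1 + shiftL (-1) - (2:ℂ) • (1 : Hs →L[ℂ] Hs)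

lemma lapCLM_apply (f : Hs) (x : ℤ) : (lapCLM f : ℤ → ℂ) x = lap (f : ℤ → ℂ) x := by
  simp only [lapCLM, ContinuousLinearMap.sub_apply, ContinuousLinearMap.add_apply,
    ContinuousLinearMap.smul_apply, ContinuousLinearMap.one_apply, lp.coeFn_sub, lp.coeFn_add,
    lp.coeFn_smul, Pi.sub_apply, Pi.add_apply, Pi.smul_apply, shiftL_apply, smul_eq_mul, lap]
  rw [show x + (-1:ℤ) = x - 1 by ring]
  ring

lemma lapCLM_norm_le : ‖lapCLM‖ ≤ 4 := by
  have h1 : ‖(1 : Hs →L[ℂ] Hs)‖ ≤ 1 := ContinuousLinearMap.norm_id_le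
  calc ‖lapCLM‖ ≤ ‖shiftL 1 + shiftL (-1)‖ + ‖(2:ℂ) • (1 : Hs →L[ℂ] Hs)‖ := norm_sub_le _ _
    _ ≤ (‖shiftL 1‖ + ‖shiftL (-1)‖) + ‖(2:ℂ)‖ * ‖(1 : Hs →L[ℂ] Hs)‖ :=
        add_le_add (norm_add_le _ _) (_root_.norm_smul_le (2:ℂ) (1 : Hs →L[ℂ] Hs))
    _ ≤ (1 + 1) + 2 * 1 := by
        refine add_le_add (add_le_add (shiftL_norm_le 1) (shiftL_norm_le (-1))) ?_
        have : ‖(2:ℂ)‖ = 2 := by norm_num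
        rw [this]
        nlinarith [h1]
    _ = 4 := by norm_num

lemma shift_adjoint (f g : Hs) :
    inner ℂ (shiftL 1 f) g = inner ℂ f (shiftL (-1) g) := by
  rw [lp.inner_eq_tsum, lp.inner_eq_tsum]
  calc ∑' x, (inner ℂ ((shiftL 1 f : ℤ → ℂ) x) ((g : ℤ → ℂ) x) : ℂ)
      = ∑' x, (fun y => conj ((f:ℤ→ℂ) y) * (g:ℤ→ℂ) (y + (-1))) (x + 1) := by
        refine tsum_congr fun x => ?_
        simp only [shiftL_apply, RCLike.inner_apply]
        norm_num [mul_comm]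
    _ = ∑' x, (fun y => conj ((f:ℤ→ℂ) y) * (g:ℤ→ℂ) (y + (-1))) x :=
        tsum_shiftC 1 (fun y => conj ((f:ℤ→ℂ) y) * (g:ℤ→ℂ) (y + (-1)))
    _ = ∑' x, (inner ℂ ((f : ℤ → ℂ) x) ((shiftL (-1) g : ℤ → ℂ) x) : ℂ) := by
        refine tsum_congr fun x => ?_
        simp only [shiftL_apply, RCLike.inner_apply, mul_comm]

lemma shift_adjoint' (f g : Hs) :
    inner ℂ (shiftL (-1) f) g = inner ℂ f (shiftL 1 g) := by
  rw [lp.inner_eq_tsum, lp.inner_eq_tsum]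
  calc ∑' x, (inner ℂ ((shiftL (-1) f : ℤ → ℂ) x) ((g : ℤ → ℂ) x) : ℂ)
      = ∑' x, (fun y => conj ((f:ℤ→ℂ) y) * (g:ℤ→ℂ) (y + 1)) (x + (-1)) := by
        refine tsum_congr fun x => ?_
        simp only [shiftL_apply, RCLike.inner_apply]
        norm_num [mul_comm]
    _ = ∑' x, (fun y => conj ((f:ℤ→ℂ) y) * (g:ℤ→ℂ) (y + 1)) x :=
        tsum_shiftC (-1) (fun y => conj ((f:ℤ→ℂ) y) * (g:ℤ→ℂ) (y + 1))
    _ = ∑' x, (inner ℂ ((f : ℤ → ℂ) x) ((shiftL 1 g : ℤ → ℂ) x) : ℂ) := by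
        refine tsum_congr fun x => ?_
        simp only [shiftL_apply, RCLike.inner_apply, mul_comm]

lemma lapCLM_selfAdjoint : IsSelfAdjoint lapCLM := by
  rw [ContinuousLinearMap.isSelfAdjoint_iff_isSymmetric]
  intro f g
  show inner ℂ (lapCLM f) g = inner ℂ f (lapCLM g)
  simp only [lapCLM, ContinuousLinearMap.sub_apply, ContinuousLinearMap.add_apply,
    ContinuousLinearMap.smul_apply, ContinuousLinearMap.one_apply]
  rw [inner_sub_left, inner_add_left, inner_sub_right, inner_add_right,
    inner_smul_left, inner_smul_right, shift_adjoint, shift_adjoint']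
  have h2 : (starRingEnd ℂ) 2 = 2 := by rw [Complex.conj_ofNat]
  rw [h2]
  ring

instance : Nontrivial Hs := by
  refine ⟨0, lp.single 2 (0:ℤ) (1:ℂ), fun hcon => ?_⟩
  have h1 : (lp.single 2 (0:ℤ) (1:ℂ) : ℤ → ℂ) 0 = 1 := lp.single_apply_self 2 0 1
  rw [← hcon] at h1
  simp at h1

/-- The Schrödinger evolution operator. -/
def UO (r : ℝ) : Hs →L[ℂ] Hs := exp ((Complex.I * (r:ℂ)) • lapCLM)

lemma smul_lap_skewAdjoint (r : ℝ) :
    (Complex.I * (r:ℂ)) • lapCLM ∈ skewAdjoint (Hs →L[ℂ] Hs) := by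
  rw [skewAdjoint.mem_iff, star_smul, lapCLM_selfAdjoint.star_eq, ← neg_smul]
  congr 1
  simp [Complex.ext_iff]

lemma UO_mem_unitary (r : ℝ) : UO r ∈ unitary (Hs →L[ℂ] Hs) :=
  letI : NormedAlgebra ℚ (Hs →L[ℂ] Hs) := .restrictScalars ℚ ℂ _
  exp_mem_unitary_of_mem_skewAdjoint (smul_lap_skewAdjoint r)

lemma UO_norm (r : ℝ) (f : Hs) : ‖UO r f‖ = ‖f‖ := by
  have hu : star (UO r) * UO r = 1 := (Unitary.mem_iff.1 (UO_mem_unitary r)).1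
  have h3 : (ContinuousLinearMap.adjoint (UO r)) (UO r f) = f := by
    rw [← ContinuousLinearMap.star_eq_adjoint]
    calc star (UO r) (UO r f) = (star (UO r) * UO r) f := rfl
      _ = f := by rw [hu]; rfl
  have h2 : inner ℂ (UO r f) (UO r f) = inner ℂ f f := by
    rw [← ContinuousLinearMap.adjoint_inner_right (UO r) f (UO r f), h3]
  have h5 : ‖UO r f‖ ^ 2 = ‖f‖ ^ 2 := by
    rw [← inner_self_eq_norm_sq (𝕜 := ℂ), ← inner_self_eq_norm_sq (𝕜 := ℂ), h2]
  calc ‖UO r f‖ = Real.sqrt (‖UO r f‖ ^ 2) := (Real.sqrt_sq (norm_nonneg _)).symm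
    _ = Real.sqrt (‖f‖ ^ 2) := by rw [h5]
    _ = ‖f‖ := Real.sqrt_sq (norm_nonneg _)

/-- coordinate evaluation -/
def evalCLM (x : ℤ) : Hs →L[ℂ] ℂ :=
  LinearMap.mkContinuous
    { toFun := fun f => f x
      map_add' := fun f g => rfl
      map_smul' := fun m f => rfl } 1
    (by intro f; rw [one_mul]; exact lp.norm_apply_le_norm (by norm_num) f x)

lemma eval_tsum {M : ℕ → Hs →L[ℂ] Hs} (h : Summable M) (f : Hs) (x : ℤ) :
    (((∑' n, M n) f : ℤ → ℂ)) x = ∑' n, ((M n f : ℤ → ℂ)) x := by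
  have := ((evalCLM x).comp (ContinuousLinearMap.apply ℂ Hs f)).map_tsum h
  exact this

lemma eval_summable {M : ℕ → Hs →L[ℂ] Hs} (h : Summable M) (f : Hs) (x : ℤ) :
    Summable fun n => ((M n f : ℤ → ℂ)) x := by
  have := h.map ((evalCLM x).comp (ContinuousLinearMap.apply ℂ Hs f))
    ((evalCLM x).comp (ContinuousLinearMap.apply ℂ Hs f)).continuous
  exact this

lemma pow_apply_iter : ∀ (n : ℕ) (f : Hs) (x : ℤ),
    (((lapCLM ^ n) f : ℤ → ℂ)) x = lap^[n] (f : ℤ → ℂ) x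
  | 0, f, x => by simp
  | (n+1), f, x => by
    have hfg : ((lapCLM f : ℤ → ℂ)) = lap (f : ℤ → ℂ) := funext (lapCLM_apply f)
    rw [pow_succ, ContinuousLinearMap.mul_apply, pow_apply_iter n (lapCLM f) x,
      Function.iterate_succ_apply, hfg]

lemma term_eq (r : ℝ) (f : Hs) (x : ℤ) (n : ℕ) :
    (((((n.factorial : ℂ)⁻¹) • ((Complex.I * (r:ℂ)) • lapCLM) ^ n) f : ℤ → ℂ)) x
      = ((Complex.I * (r:ℂ)) ^ n / (n.factorial : ℂ)) * lap^[n] (f : ℤ → ℂ) x := by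
  rw [smul_pow]
  simp only [ContinuousLinearMap.smul_apply, lp.coeFn_smul, Pi.smul_apply, smul_eq_mul]
  rw [pow_apply_iter]
  ring

lemma U_apply_eq (r : ℝ) (f : Hs) (x : ℤ) :
    ((UO r f : ℤ → ℂ)) x
      = ∑' n : ℕ, ((Complex.I * (r:ℂ)) ^ n / (n.factorial : ℂ)) * lap^[n] (f : ℤ → ℂ) x := by
  have h0 : UO r = ∑' n : ℕ, ((n.factorial : ℂ)⁻¹) • ((Complex.I * (r:ℂ)) • lapCLM) ^ n :=
    congrFun (exp_eq_tsum ℂ) _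
  rw [h0, eval_tsum (expSeries_summable' _) f x]
  exact tsum_congr fun n => term_eq r f x n

/-- tail operator -/
def tailO (r : ℝ) (m : ℕ) : Hs →L[ℂ] Hs :=
  ∑' k : ℕ, (((m + k).factorial : ℂ)⁻¹) • ((Complex.I * (r:ℂ)) • lapCLM) ^ (m + k)

lemma tail_summable (r : ℝ) (m : ℕ) :
    Summable fun k : ℕ => (((m + k).factorial : ℂ)⁻¹) • ((Complex.I * (r:ℂ)) • lapCLM) ^ (m + k) :=
  (expSeries_summable' (𝕂 := ℂ) ((Complex.I * (r:ℂ)) • lapCLM)).comp_injective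
    (fun a b hab => by omega)

/-- finite propagation: iterated Laplacian vanishes away from the support -/
lemma lap_iter_vanish : ∀ (n : ℕ) (f : ℤ → ℂ) (x : ℤ),
    (∀ y : ℤ, |y - x| ≤ (n:ℤ) → f y = 0) → lap^[n] f x = 0
  | 0, f, x, h => by simpa using h x (by simp)
  | (n+1), f, x, h => by
    rw [Function.iterate_succ_apply]
    refine lap_iter_vanish n (lap f) x (fun y hy => ?_)
    have hy' := abs_le.1 hy
    have h1 : f (y + 1) = 0 := h (y+1) (by rw [abs_le]; push_cast; omega)
    have h2 : f y = 0 := h y (by rw [abs_le]; push_cast; omega)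
    have h3 : f (y - 1) = 0 := h (y-1) (by rw [abs_le]; push_cast; omega)
    simp [lap, h1, h2, h3]

/-- on the far set, `UO` agrees with the tail operator -/
lemma U_eq_tail (r : ℝ) (m : ℕ) (f : Hs) (x : ℤ)
    (hv : ∀ n, n < m → lap^[n] (f : ℤ → ℂ) x = 0) :
    ((UO r f : ℤ → ℂ)) x = ((tailO r m f : ℤ → ℂ)) x := by
  have hsum : Summable (fun n : ℕ =>
      ((Complex.I * (r:ℂ)) ^ n / (n.factorial : ℂ)) * lap^[n] (f : ℤ → ℂ) x) :=
    (eval_summable (expSeries_summable' (𝕂 := ℂ) ((Complex.I * (r:ℂ)) • lapCLM)) f x).congr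
      (fun n => term_eq r f x n)
  have hU : ((UO r f : ℤ → ℂ)) x
      = ∑' n : ℕ, ((Complex.I * (r:ℂ)) ^ n / (n.factorial : ℂ)) * lap^[n] (f : ℤ → ℂ) x :=
    U_apply_eq r f x
  have htail : ((tailO r m f : ℤ → ℂ)) x
      = ∑' k : ℕ, ((Complex.I * (r:ℂ)) ^ (m+k) / ((m+k).factorial : ℂ))
          * lap^[m+k] (f : ℤ → ℂ) x := by
    rw [tailO, eval_tsum (tail_summable r m) f x]
    exact tsum_congr fun k => term_eq r f x (m + k)
  have hz : ∑ i ∈ Finset.range m,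
      ((Complex.I * (r:ℂ)) ^ i / (i.factorial : ℂ)) * lap^[i] (f : ℤ → ℂ) x = 0 :=
    Finset.sum_eq_zero fun i hi => by rw [hv i (Finset.mem_range.1 hi), mul_zero]
  have hshift := Summable.sum_add_tsum_nat_add (f := fun n : ℕ =>
      ((Complex.I * (r:ℂ)) ^ n / (n.factorial : ℂ)) * lap^[n] (f : ℤ → ℂ) x) m hsum
  rw [hz, zero_add] at hshift
  rw [hU, htail, ← hshift]
  exact tsum_congr fun k => by rw [add_comm]

lemma opnorm_T_le {r B : ℝ} (hr : |r| ≤ B) : ‖(Complex.I * (r:ℂ)) • lapCLM‖ ≤ 4 * B := by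
  calc ‖(Complex.I * (r:ℂ)) • lapCLM‖
      ≤ ‖Complex.I * (r:ℂ)‖ * ‖lapCLM‖ := _root_.norm_smul_le (Complex.I * (r:ℂ)) lapCLM
    _ ≤ |r| * 4 := by
        have h1 : ‖Complex.I * (r:ℂ)‖ = |r| := by
          rw [norm_mul, Complex.norm_I, one_mul, Complex.norm_real, Real.norm_eq_abs]
        rw [h1]
        exact mul_le_mul_of_nonneg_left lapCLM_norm_le (abs_nonneg r)
    _ ≤ 4 * B := by nlinarith [abs_nonneg r]

lemma term_norm_le {r B : ℝ} (hr : |r| ≤ B) (hB : 0 ≤ B) (n : ℕ) :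
    ‖((n.factorial : ℂ)⁻¹) • ((Complex.I * (r:ℂ)) • lapCLM) ^ n‖
      ≤ (4 * B) ^ n / (n.factorial : ℝ) := by
  have h0 : (0:ℝ) ≤ 4 * B := by linarith
  have hpow : ‖((Complex.I * (r:ℂ)) • lapCLM) ^ n‖ ≤ (4 * B) ^ n := by
    calc ‖((Complex.I * (r:ℂ)) • lapCLM) ^ n‖
        ≤ ‖(Complex.I * (r:ℂ)) • lapCLM‖ ^ n := norm_pow_le ((Complex.I * (r:ℂ)) • lapCLM) n
      _ ≤ (4 * B) ^ n := pow_le_pow_left₀ (norm_nonneg _) (opnorm_T_le hr) n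
  calc ‖((n.factorial : ℂ)⁻¹) • ((Complex.I * (r:ℂ)) • lapCLM) ^ n‖
      ≤ ‖((n.factorial : ℂ)⁻¹)‖ * ‖((Complex.I * (r:ℂ)) • lapCLM) ^ n‖ :=
        _root_.norm_smul_le ((n.factorial : ℂ)⁻¹) (((Complex.I * (r:ℂ)) • lapCLM) ^ n)
    _ ≤ (n.factorial : ℝ)⁻¹ * (4 * B) ^ n := by
        refine mul_le_mul ?_ hpow (norm_nonneg _) (by positivity)
        rw [norm_inv, Complex.norm_natCast]
    _ = (4 * B) ^ n / (n.factorial : ℝ) := by ring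

lemma real_tail_le {B : ℝ} (hB : 0 ≤ B) (m : ℕ) :
    ∑' k : ℕ, (4 * B) ^ (m + k) / ((m + k).factorial : ℝ)
      ≤ (4 * B) ^ m / (m.factorial : ℝ) * Real.exp (4 * B) := by
  have h0 : (0:ℝ) ≤ 4 * B := by linarith
  have hterm : ∀ k : ℕ, (4 * B) ^ (m + k) / ((m + k).factorial : ℝ)
      ≤ (4 * B) ^ m / (m.factorial : ℝ) * ((4 * B) ^ k / (k.factorial : ℝ)) := by
    intro k
    have hfac : (m.factorial * k.factorial : ℝ) ≤ ((m + k).factorial : ℝ) := by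
      exact_mod_cast Nat.le_of_dvd (m+k).factorial_pos
        (Nat.factorial_mul_factorial_dvd_factorial_add m k)
    rw [pow_add, div_mul_div_comm]
    gcongr
  have hsum1 : Summable fun k : ℕ => (4 * B) ^ (m + k) / ((m + k).factorial : ℝ) :=
    (Real.summable_pow_div_factorial (4 * B)).comp_injective (fun a b hab => by omega)
  have hsum2 : Summable fun k : ℕ =>
      (4 * B) ^ m / (m.factorial : ℝ) * ((4 * B) ^ k / (k.factorial : ℝ)) :=
    (Real.summable_pow_div_factorial (4 * B)).mul_left _
  calc ∑' k : ℕ, (4 * B) ^ (m + k) / ((m + k).factorial : ℝ)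
      ≤ ∑' k : ℕ, (4 * B) ^ m / (m.factorial : ℝ) * ((4 * B) ^ k / (k.factorial : ℝ)) :=
        Summable.tsum_le_tsum hterm hsum1 hsum2
    _ = (4 * B) ^ m / (m.factorial : ℝ) * ∑' k : ℕ, (4 * B) ^ k / (k.factorial : ℝ) :=
        tsum_mul_left
    _ = (4 * B) ^ m / (m.factorial : ℝ) * Real.exp (4 * B) := by
        rw [Real.exp_eq_exp_ℝ, exp_eq_tsum_div]

lemma tailO_norm_le {r B : ℝ} (hr : |r| ≤ B) (hB : 0 ≤ B) (m : ℕ) :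
    ‖tailO r m‖ ≤ (4 * B) ^ m / (m.factorial : ℝ) * Real.exp (4 * B) := by
  have hsum2 : Summable fun k : ℕ => (4 * B) ^ (m + k) / ((m + k).factorial : ℝ) :=
    (Real.summable_pow_div_factorial (4 * B)).comp_injective (fun a b hab => by omega)
  have hsumnorm : Summable fun k : ℕ =>
      ‖(((m + k).factorial : ℂ)⁻¹) • ((Complex.I * (r:ℂ)) • lapCLM) ^ (m + k)‖ :=
    Summable.of_nonneg_of_le (fun k => norm_nonneg _)
      (fun k => term_norm_le hr hB (m + k)) hsum2
  calc ‖tailO r m‖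
      ≤ ∑' k : ℕ, ‖(((m + k).factorial : ℂ)⁻¹) • ((Complex.I * (r:ℂ)) • lapCLM) ^ (m + k)‖ :=
        norm_tsum_le_tsum_norm hsumnorm
    _ ≤ ∑' k : ℕ, (4 * B) ^ (m + k) / ((m + k).factorial : ℝ) :=
        Summable.tsum_le_tsum (fun k => term_norm_le hr hB (m + k)) hsumnorm hsum2
    _ ≤ _ := real_tail_le hB m

-- real ℓ² Cauchy–Schwarz
lemma memlp_real {a : ℤ → ℝ} (h : Summable fun x => a x ^ 2) : Memℓp a 2 :=
  memℓp_gen (by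
    have he : ∀ x : ℤ, ‖a x‖ ^ (2:ℝ≥0∞).toReal = a x ^ 2 := fun x => by
      rw [rpow_two_eq, Real.norm_eq_abs, sq_abs]
    simpa only [he] using h)

lemma lp_norm_sq_real (f : lp (fun _ : ℤ => ℝ) 2) : ‖f‖ ^ 2 = ∑' x, (f x) ^ 2 := by
  have := lp.norm_rpow_eq_tsum (by norm_num : 0 < (2:ℝ≥0∞).toReal) f
  rw [rpow_two_eq ‖f‖] at this
  rw [this]
  refine tsum_congr fun x => ?_
  rw [rpow_two_eq, Real.norm_eq_abs, sq_abs]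

lemma cs_tsum {a b : ℤ → ℝ} (ha : Summable fun x => a x ^ 2) (hb : Summable fun x => b x ^ 2) :
    ∑' x, a x * b x ≤ Real.sqrt (∑' x, a x ^ 2) * Real.sqrt (∑' x, b x ^ 2) := by
  set A : lp (fun _ : ℤ => ℝ) 2 := ⟨a, memlp_real ha⟩
  set B : lp (fun _ : ℤ => ℝ) 2 := ⟨b, memlp_real hb⟩
  have h1 : inner ℝ A B = ∑' x, a x * b x := by
    rw [lp.inner_eq_tsum]; exact tsum_congr fun x => mul_comm _ _
  have h2 : ‖A‖ = Real.sqrt (∑' x, a x ^ 2) := by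
    rw [← lp_norm_sq_real A, Real.sqrt_sq (norm_nonneg _)]
  have h3 : ‖B‖ = Real.sqrt (∑' x, b x ^ 2) := by
    rw [← lp_norm_sq_real B, Real.sqrt_sq (norm_nonneg _)]
  calc ∑' x, a x * b x = inner ℝ A B := h1.symm
    _ ≤ ‖A‖ * ‖B‖ := real_inner_le_norm A B
    _ = _ := by rw [h2, h3]

lemma summable_mul_of_sq {a b : ℤ → ℝ} (ha : Summable fun x => a x ^ 2)
    (hb : Summable fun x => b x ^ 2) : Summable fun x => a x * b x := by
  set A : lp (fun _ : ℤ => ℝ) 2 := ⟨a, memlp_real ha⟩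
  set B : lp (fun _ : ℤ => ℝ) 2 := ⟨b, memlp_real hb⟩
  have := lp.summable_inner (𝕜 := ℝ) A B
  simpa [RCLike.inner_apply, starRingEnd_apply, mul_comm] using this

/-- Strong bilinear estimate. -/
theorem stmt_19 (f₁ f₂ : ℤ → ℂ)
    (h₁ : Summable fun x => ‖f₁ x‖ ^ 2) (h₂ : Summable fun x => ‖f₂ x‖ ^ 2)
    (B : ℝ) (hB : 0 < B) (s : ℝ)
    (hs : s = sInf {d : ℝ | ∃ x y : ℤ, f₁ x ≠ 0 ∧ f₂ y ≠ 0 ∧ d = |(x : ℝ) - (y : ℝ)|}) :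
    ∀ r : ℝ, |r| ≤ B →
      ∑' x : ℤ, ‖Tr r f₁ x * Tr r f₂ x‖ ≤
        min 1 (8 * Real.exp (16 * B) * (4 * B) ^ ⌈s / 2⌉₊ /
            ((Nat.factorial ⌈s / 2⌉₊ : ℝ))) *
          (l2norm f₁ * l2norm f₂) := by
  classical
  intro r hr
  set m : ℕ := ⌈s / 2⌉₊ with hm
  set F₁ : Hs := ⟨f₁, memlp_of_sq h₁⟩ with hF₁
  set F₂ : Hs := ⟨f₂, memlp_of_sq h₂⟩ with hF₂
  set g₁ : Hs := UO r F₁ with hg₁def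
  set g₂ : Hs := UO r F₂ with hg₂def
  have hT₁ : ∀ x : ℤ, Tr r f₁ x = ((g₁ : ℤ → ℂ)) x := fun x => (U_apply_eq r F₁ x).symm
  have hT₂ : ∀ x : ℤ, Tr r f₂ x = ((g₂ : ℤ → ℂ)) x := fun x => (U_apply_eq r F₂ x).symm
  have hnorm₁ : l2norm f₁ = ‖F₁‖ := by
    rw [l2norm, show (∑' x : ℤ, ‖f₁ x‖ ^ 2) = ‖F₁‖ ^ 2 from (lp_norm_sq F₁).symm]
    exact Real.sqrt_sq (norm_nonneg _)
  have hnorm₂ : l2norm f₂ = ‖F₂‖ := by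
    rw [l2norm, show (∑' x : ℤ, ‖f₂ x‖ ^ 2) = ‖F₂‖ ^ 2 from (lp_norm_sq F₂).symm]
    exact Real.sqrt_sq (norm_nonneg _)
  have hg₁ : ‖g₁‖ = ‖F₁‖ := UO_norm r F₁
  have hg₂ : ‖g₂‖ = ‖F₂‖ := UO_norm r F₂
  have hsq₁ : Summable fun x : ℤ => ‖(g₁ : ℤ → ℂ) x‖ ^ 2 := sq_summable' (lp.memℓp g₁)
  have hsq₂ : Summable fun x : ℤ => ‖(g₂ : ℤ → ℂ) x‖ ^ 2 := sq_summable' (lp.memℓp g₂)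
  have hLHS : (∑' x : ℤ, ‖Tr r f₁ x * Tr r f₂ x‖)
      = ∑' x : ℤ, ‖(g₁ : ℤ → ℂ) x‖ * ‖(g₂ : ℤ → ℂ) x‖ :=
    tsum_congr fun x => by rw [hT₁ x, hT₂ x, norm_mul]
  -- trivial bound via Cauchy-Schwarz and unitarity
  have sqrt₁ : Real.sqrt (∑' x : ℤ, ‖(g₁ : ℤ → ℂ) x‖ ^ 2) = ‖F₁‖ := by
    rw [show (∑' x : ℤ, ‖(g₁ : ℤ → ℂ) x‖ ^ 2) = ‖g₁‖ ^ 2 from (lp_norm_sq g₁).symm,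
      Real.sqrt_sq (norm_nonneg _), hg₁]
  have sqrt₂ : Real.sqrt (∑' x : ℤ, ‖(g₂ : ℤ → ℂ) x‖ ^ 2) = ‖F₂‖ := by
    rw [show (∑' x : ℤ, ‖(g₂ : ℤ → ℂ) x‖ ^ 2) = ‖g₂‖ ^ 2 from (lp_norm_sq g₂).symm,
      Real.sqrt_sq (norm_nonneg _), hg₂]
  have boundA : ∑' x : ℤ, ‖(g₁ : ℤ → ℂ) x‖ * ‖(g₂ : ℤ → ℂ) x‖ ≤ ‖F₁‖ * ‖F₂‖ := by
    have hcs := cs_tsum (a := fun x : ℤ => ‖(g₁ : ℤ → ℂ) x‖)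
      (b := fun x : ℤ => ‖(g₂ : ℤ → ℂ) x‖) hsq₁ hsq₂
    rw [sqrt₁, sqrt₂] at hcs
    exact hcs
  -- decay bound
  set P₁ : ℤ → Prop := fun x => ∀ y : ℤ, f₁ y ≠ 0 → (m:ℤ) ≤ |x - y| with hP₁
  set P₂ : ℤ → Prop := fun x => ∀ y : ℤ, f₂ y ≠ 0 → (m:ℤ) ≤ |x - y| with hP₂
  have hcover : ∀ x : ℤ, P₁ x ∨ P₂ x := by
    intro x
    by_contra hc
    push_neg at hc
    obtain ⟨hc₁, hc₂⟩ := hc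
    simp only [hP₁] at hc₁
    simp only [hP₂] at hc₂
    push_neg at hc₁ hc₂
    obtain ⟨y₁, hy₁, hy₁'⟩ := hc₁
    obtain ⟨y₂, hy₂, hy₂'⟩ := hc₂
    have hm1 : 1 ≤ m := by
      have h0 := abs_nonneg (x - y₁)
      have : (0:ℤ) < (m:ℤ) := lt_of_le_of_lt h0 hy₁'
      exact_mod_cast this
    have hbdd : BddBelow {d : ℝ | ∃ a b : ℤ, f₁ a ≠ 0 ∧ f₂ b ≠ 0 ∧ d = |(a : ℝ) - (b : ℝ)|} := by
      refine ⟨0, fun d hd => ?_⟩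
      obtain ⟨a, b, _, _, hd'⟩ := hd
      rw [hd']; exact abs_nonneg _
    have hmem : |(y₁ : ℝ) - (y₂ : ℝ)|
        ∈ {d : ℝ | ∃ a b : ℤ, f₁ a ≠ 0 ∧ f₂ b ≠ 0 ∧ d = |(a : ℝ) - (b : ℝ)|} :=
      ⟨y₁, y₂, hy₁, hy₂, rfl⟩
    have hsle : s ≤ |(y₁ : ℝ) - (y₂ : ℝ)| := by
      rw [hs]; exact csInf_le hbdd hmem
    have hZ : |y₁ - y₂| ≤ 2*(m:ℤ) - 2 := by
      have t1 : |y₁ - y₂| ≤ |y₁ - x| + |x - y₂| := abs_sub_le y₁ x y₂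
      have t2 : |y₁ - x| = |x - y₁| := abs_sub_comm y₁ x
      omega
    have hsR : |(y₁ : ℝ) - (y₂ : ℝ)| ≤ 2*(m:ℝ) - 2 := by
      have : ((|y₁ - y₂| : ℤ) : ℝ) ≤ ((2*(m:ℤ) - 2 : ℤ) : ℝ) := by exact_mod_cast hZ
      rw [Int.cast_abs] at this
      push_cast at this ⊢
      linarith
    have hceil : ((m:ℝ) - 1) < s / 2 := by
      have h1 : (m - 1 : ℕ) < ⌈s / 2⌉₊ := by omega
      have h2 : ((m - 1 : ℕ) : ℝ) < s / 2 := Nat.lt_ceil.1 h1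
      have h3 : ((m - 1 : ℕ) : ℝ) = (m:ℝ) - 1 := by
        push_cast [Nat.cast_sub hm1]; ring
      linarith [h3 ▸ h2]
    linarith
  have hvan : ∀ (f : ℤ → ℂ) (F : Hs), (F : ℤ → ℂ) = f →
      ∀ x : ℤ, (∀ y : ℤ, f y ≠ 0 → (m:ℤ) ≤ |x - y|) →
      ∀ n, n < m → lap^[n] (F : ℤ → ℂ) x = 0 := by
    intro f F hFf x hx n hn
    rw [hFf]
    refine lap_iter_vanish n f x (fun y hy => ?_)
    by_contra hfy
    have h1 := hx y hfy
    have h2 : |y - x| = |x - y| := abs_sub_comm y x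
    have h3 : (n:ℤ) < (m:ℤ) := by exact_mod_cast hn
    omega
  have htail₁ : ∀ x : ℤ, P₁ x → ((g₁ : ℤ → ℂ)) x = ((tailO r m F₁ : ℤ → ℂ)) x :=
    fun x hx => U_eq_tail r m F₁ x (hvan f₁ F₁ rfl x hx)
  have htail₂ : ∀ x : ℤ, P₂ x → ((g₂ : ℤ → ℂ)) x = ((tailO r m F₂ : ℤ → ℂ)) x :=
    fun x hx => U_eq_tail r m F₂ x (hvan f₂ F₂ rfl x hx)
  set Cm : ℝ := (4 * B) ^ m / (m.factorial : ℝ) * Real.exp (4 * B) with hCm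
  set a₁ : ℤ → ℝ := fun x => if P₁ x then ‖(g₁ : ℤ → ℂ) x‖ else 0 with ha₁
  set a₂ : ℤ → ℝ := fun x => if P₂ x then ‖(g₂ : ℤ → ℂ) x‖ else 0 with ha₂
  have key : ∀ (aa : ℤ → ℝ) (PP : ℤ → Prop) (gg : Hs) (FF : Hs),
      (aa = fun x => if PP x then ‖(gg : ℤ → ℂ) x‖ else 0) →
      (∀ x : ℤ, PP x → ((gg : ℤ → ℂ)) x = ((tailO r m FF : ℤ → ℂ)) x) →
      (Summable fun x : ℤ => aa x ^ 2) ∧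
        Real.sqrt (∑' x : ℤ, aa x ^ 2) ≤ Cm * ‖FF‖ := by
    intro aa PP gg FF haa htl
    have hsq_le : ∀ x : ℤ, aa x ^ 2 ≤ ‖(tailO r m FF : ℤ → ℂ) x‖ ^ 2 := by
      intro x
      rw [haa]
      by_cases hx : PP x
      · simp only [if_pos hx]
        rw [htl x hx]
      · simp only [if_neg hx]
        simpa using sq_nonneg ‖(tailO r m FF : ℤ → ℂ) x‖
    have hsqt : Summable fun x : ℤ => ‖(tailO r m FF : ℤ → ℂ) x‖ ^ 2 :=
      sq_summable' (lp.memℓp _)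
    have hsumm : Summable fun x : ℤ => aa x ^ 2 :=
      Summable.of_nonneg_of_le (fun x => sq_nonneg _) hsq_le hsqt
    refine ⟨hsumm, ?_⟩
    have h1 : ∑' x : ℤ, aa x ^ 2 ≤ ‖tailO r m FF‖ ^ 2 := by
      calc ∑' x : ℤ, aa x ^ 2 ≤ ∑' x : ℤ, ‖(tailO r m FF : ℤ → ℂ) x‖ ^ 2 :=
            Summable.tsum_le_tsum hsq_le hsumm hsqt
        _ = ‖tailO r m FF‖ ^ 2 := (lp_norm_sq _).symm
    calc Real.sqrt (∑' x : ℤ, aa x ^ 2) ≤ Real.sqrt (‖tailO r m FF‖ ^ 2) :=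
          Real.sqrt_le_sqrt h1
      _ = ‖tailO r m FF‖ := Real.sqrt_sq (norm_nonneg _)
      _ ≤ ‖tailO r m‖ * ‖FF‖ := (tailO r m).le_opNorm FF
      _ ≤ Cm * ‖FF‖ :=
          mul_le_mul_of_nonneg_right (tailO_norm_le hr hB.le m) (norm_nonneg _)
  obtain ⟨ha₁summ, ha₁sqrt⟩ := key a₁ P₁ g₁ F₁ ha₁ htail₁
  obtain ⟨ha₂summ, ha₂sqrt⟩ := key a₂ P₂ g₂ F₂ ha₂ htail₂
  have piece₁ : ∑' x : ℤ, a₁ x * ‖(g₂ : ℤ → ℂ) x‖ ≤ Cm * ‖F₁‖ * ‖F₂‖ := by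
    have hcs := cs_tsum (a := a₁) (b := fun x : ℤ => ‖(g₂ : ℤ → ℂ) x‖) ha₁summ hsq₂
    rw [sqrt₂] at hcs
    calc ∑' x : ℤ, a₁ x * ‖(g₂ : ℤ → ℂ) x‖
        ≤ Real.sqrt (∑' x : ℤ, a₁ x ^ 2) * ‖F₂‖ := hcs
      _ ≤ Cm * ‖F₁‖ * ‖F₂‖ := mul_le_mul_of_nonneg_right ha₁sqrt (norm_nonneg _)
  have piece₂ : ∑' x : ℤ, a₂ x * ‖(g₁ : ℤ → ℂ) x‖ ≤ Cm * ‖F₂‖ * ‖F₁‖ := by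
    have hcs := cs_tsum (a := a₂) (b := fun x : ℤ => ‖(g₁ : ℤ → ℂ) x‖) ha₂summ hsq₁
    rw [sqrt₁] at hcs
    calc ∑' x : ℤ, a₂ x * ‖(g₁ : ℤ → ℂ) x‖
        ≤ Real.sqrt (∑' x : ℤ, a₂ x ^ 2) * ‖F₁‖ := hcs
      _ ≤ Cm * ‖F₂‖ * ‖F₁‖ := mul_le_mul_of_nonneg_right ha₂sqrt (norm_nonneg _)
  have hpt : ∀ x : ℤ, ‖(g₁ : ℤ → ℂ) x‖ * ‖(g₂ : ℤ → ℂ) x‖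
      ≤ a₁ x * ‖(g₂ : ℤ → ℂ) x‖ + a₂ x * ‖(g₁ : ℤ → ℂ) x‖ := by
    intro x
    have h2nn : 0 ≤ a₂ x * ‖(g₁ : ℤ → ℂ) x‖ := by
      rw [ha₂]; dsimp only; split <;> positivity
    have h1nn : 0 ≤ a₁ x * ‖(g₂ : ℤ → ℂ) x‖ := by
      rw [ha₁]; dsimp only; split <;> positivity
    rcases hcover x with h | h
    · have he : a₁ x = ‖(g₁ : ℤ → ℂ) x‖ := by rw [ha₁]; exact if_pos h
      rw [he]
      exact le_add_of_nonneg_right h2nn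
    · have he : a₂ x = ‖(g₂ : ℤ → ℂ) x‖ := by rw [ha₂]; exact if_pos h
      rw [he, mul_comm ‖(g₂ : ℤ → ℂ) x‖ ‖(g₁ : ℤ → ℂ) x‖]
      exact le_add_of_nonneg_left h1nn
  have hsummul : Summable fun x : ℤ => ‖(g₁ : ℤ → ℂ) x‖ * ‖(g₂ : ℤ → ℂ) x‖ :=
    summable_mul_of_sq hsq₁ hsq₂
  have hsplit₁ : Summable fun x : ℤ => a₁ x * ‖(g₂ : ℤ → ℂ) x‖ :=
    summable_mul_of_sq ha₁summ hsq₂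
  have hsplit₂ : Summable fun x : ℤ => a₂ x * ‖(g₁ : ℤ → ℂ) x‖ :=
    summable_mul_of_sq ha₂summ hsq₁
  have boundB : ∑' x : ℤ, ‖(g₁ : ℤ → ℂ) x‖ * ‖(g₂ : ℤ → ℂ) x‖
      ≤ 2 * Cm * (‖F₁‖ * ‖F₂‖) := by
    calc ∑' x : ℤ, ‖(g₁ : ℤ → ℂ) x‖ * ‖(g₂ : ℤ → ℂ) x‖
        ≤ ∑' x : ℤ, (a₁ x * ‖(g₂ : ℤ → ℂ) x‖ + a₂ x * ‖(g₁ : ℤ → ℂ) x‖) :=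
          Summable.tsum_le_tsum hpt hsummul (hsplit₁.add hsplit₂)
      _ = (∑' x : ℤ, a₁ x * ‖(g₂ : ℤ → ℂ) x‖) + ∑' x : ℤ, a₂ x * ‖(g₁ : ℤ → ℂ) x‖ :=
          Summable.tsum_add hsplit₁ hsplit₂
      _ ≤ Cm * ‖F₁‖ * ‖F₂‖ + Cm * ‖F₂‖ * ‖F₁‖ := add_le_add piece₁ piece₂
      _ = 2 * Cm * (‖F₁‖ * ‖F₂‖) := by ring
  -- conclusion
  rw [hnorm₁, hnorm₂, hLHS]
  have hprod : (0:ℝ) ≤ ‖F₁‖ * ‖F₂‖ := mul_nonneg (norm_nonneg _) (norm_nonneg _)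
  rw [min_mul_of_nonneg _ _ hprod, le_min_iff]
  constructor
  · rw [one_mul]; exact boundA
  · have h2C : 2 * Cm ≤ 8 * Real.exp (16 * B) * (4 * B) ^ m / (m.factorial : ℝ) := by
      have hq : (0:ℝ) ≤ (4 * B) ^ m / (m.factorial : ℝ) := by positivity
      have he : Real.exp (4 * B) ≤ Real.exp (16 * B) := Real.exp_le_exp.2 (by linarith)
      have he0 : (0:ℝ) < Real.exp (4 * B) := Real.exp_pos _
      have hre : 8 * Real.exp (16 * B) * (4 * B) ^ m / (m.factorial : ℝ)
          = 8 * Real.exp (16 * B) * ((4 * B) ^ m / (m.factorial : ℝ)) := by ring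
      rw [hre, hCm]
      nlinarith
    calc ∑' x : ℤ, ‖(g₁ : ℤ → ℂ) x‖ * ‖(g₂ : ℤ → ℂ) x‖
        ≤ 2 * Cm * (‖F₁‖ * ‖F₂‖) := boundB
      _ ≤ 8 * Real.exp (16 * B) * (4 * B) ^ m / (m.factorial : ℝ) * (‖F₁‖ * ‖F₂‖) :=
          mul_le_mul_of_nonneg_right h2C hprod

end
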